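/- arXiv:1811.08457 — 4 statements merged into one kernel-verified Lean document; each statement's English description precedes it below -/
import Mathlib

section
/- For any natural numbers n and k and any coloring f : [ω₁]ⁿ → k of the n-element subsets of ω₁ with k colors, there exists a subset A ⊆ ω₁ of order type ω + 1 such that f is constant on the n-element subsets of A. -/
/-!
A closure argument gives `δ < ω₁` such that for every finite `F ⊆ δ` some `y < δ` above `F` colours
each set `insert y s` (`s ⊆ F`) like `insert δ s`: over a fixed `F` only countably many such colour
patterns occur, there are countably many `F` below any countable ordinal, and `δ` is chosen not to
be the least realisation of any pattern over its own finite subsets. Iterating gives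
`x₀ < x₁ < ⋯ < δ` along which the colour of an `(m+1)`-set depends only on its lowest `m` elements:
it is the colour of those elements together with `δ`. Ramsey's theorem on `ℕ`, proved in the same
way with a nonprincipal ultrafilter in place of `δ`, thins the sequence out until these colours are
constant, and then `{xᵢ} ∪ {δ}` is homogeneous.
-/

open Finset Filter Ordinal Cardinal

section EndHomogeneous

variable {β κ : Type*} [DecidableEq β]

def IsEndHomogeneous (f h : Finset β → κ) (x : ℕ → β) : Prop :=
  ∀ i, ∀ I ⊆ range i, f (insert (x i) (I.image x)) = h (I.image x)

variable {f h : Finset β → κ} {x : ℕ → β}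

theorem IsEndHomogeneous.comp (hx : IsEndHomogeneous f h x) {e : ℕ → ℕ} (he : StrictMono e) :
    IsEndHomogeneous f h (x ∘ e) := by
  intro i I hI
  rw [← image_image]
  refine hx (e i) _ fun j hj => ?_
  obtain ⟨l, hl, rfl⟩ := mem_image.1 hj
  exact mem_range.2 (he (mem_range.1 (hI hl)))

theorem IsEndHomogeneous.apply_image_eq (hx : IsEndHomogeneous f h x) {m : ℕ} {c : κ}
    (hc : ∀ I : Finset ℕ, I.card = m → h (I.image x) = c) (I : Finset ℕ) (hI : I.card = m + 1) :
    f (I.image x) = c := by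
  have hne : I.Nonempty := card_pos.1 (by omega)
  have hlt : I.erase (I.max' hne) ⊆ range (I.max' hne) := fun j hj =>
    mem_range.2 ((I.le_max' j (mem_of_mem_erase hj)).lt_of_ne (ne_of_mem_erase hj))
  rw [← insert_erase (I.max'_mem hne), image_insert, hx _ _ hlt]
  exact hc _ (by rw [card_erase_of_mem (I.max'_mem hne), hI, Nat.add_sub_cancel])

end EndHomogeneous

theorem exists_strictMono_isEndHomogeneous {β κ : Type*} [LinearOrder β] {f h : Finset β → κ}
    {S : Set β}
    (hS : ∀ F : Finset β, ↑F ⊆ S → ∃ y ∈ S, (∀ a ∈ F, a < y) ∧ ∀ s ⊆ F, f (insert y s) = h s) :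
    ∃ x : ℕ → β, StrictMono x ∧ (∀ i, x i ∈ S) ∧ IsEndHomogeneous f h x := by
  have : Nonempty β := ⟨(hS ∅ (by simp)).choose⟩
  choose! w hwS hwlt hwf using hS
  let pre : ℕ → Finset β := fun n =>
    Nat.rec (motive := fun _ => Finset β) ∅ (fun _ F => insert (w F) F) n
  have hpreS : ∀ n, (pre n : Set β) ⊆ S := by
    intro n
    induction n with
    | zero => simp [pre]
    | succ n ih =>
      simp only [pre, coe_insert, Set.insert_subset_iff]
      exact ⟨hwS _ ih, ih⟩
  have hpre : ∀ n, pre n = (range n).image (fun i => w (pre i)) := by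
    intro n
    induction n with
    | zero => rfl
    | succ n ih => rw [range_add_one, image_insert, ← ih]
  refine ⟨fun i => w (pre i), strictMono_nat_of_lt_succ fun i => ?_, fun i => hwS _ (hpreS i),
    fun i I hI => ?_⟩
  · exact hwlt _ (hpreS (i + 1)) _ (mem_insert_self _ _)
  · refine hwf _ (hpreS i) _ ?_
    rw [hpre i]
    exact image_subset_image hI

theorem Nat.exists_strictMono_isEndHomogeneous {κ : Type*} [Finite κ] (f : Finset ℕ → κ) :
    ∃ (h : Finset ℕ → κ) (x : ℕ → ℕ), StrictMono x ∧ IsEndHomogeneous f h x := by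
  have hlim : ∀ s, ∃ c, ∀ᶠ y in (hyperfilter ℕ : Filter ℕ), f (insert y s) = c := fun s => by
    obtain ⟨c, hc⟩ := ((hyperfilter ℕ).map fun y => f (insert y s)).eq_pure_of_finite
    exact ⟨c, (Ultrafilter.ext_iff.1 hc {c}).2 rfl⟩
  choose h hh using hlim
  obtain ⟨x, hx, -, hend⟩ := _root_.exists_strictMono_isEndHomogeneous (f := f) (h := h)
    (S := Set.univ) fun F _ => by
      obtain ⟨y, hy, hyf⟩ := (((F.eventually_all).2 fun a _ =>
        Nat.hyperfilter_le_atTop (eventually_gt_atTop a)).and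
        ((F.powerset.eventually_all).2 fun s _ => hh s)).exists
      exact ⟨y, trivial, hy, fun s hs => hyf s (mem_powerset.2 hs)⟩
  exact ⟨h, x, hx, hend⟩

theorem exists_strictMono_monochromatic {κ : Type*} [Finite κ] :
    ∀ (m : ℕ) (g : Finset ℕ → κ),
      ∃ e : ℕ → ℕ, StrictMono e ∧ ∃ c, ∀ I : Finset ℕ, I.card = m → g (I.image e) = c
  | 0, g => ⟨id, strictMono_id, g ∅, fun I hI => by rw [card_eq_zero.1 hI, image_empty]⟩
  | m + 1, g => by
    obtain ⟨h, x, hx, hend⟩ := Nat.exists_strictMono_isEndHomogeneous g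
    obtain ⟨e, he, c, hc⟩ := exists_strictMono_monochromatic m fun I => h (I.image x)
    refine ⟨x ∘ e, hx.comp he, c, (hend.comp he).apply_image_eq fun I hI => ?_⟩
    rw [← image_image]
    exact hc I hI

theorem Ordinal.countable_Iio_of_lt_omega_one {β : Ordinal.{u}} (hβ : β < ω₁) :
    (Set.Iio β).Countable := by
  rw [← le_aleph0_iff_set_countable, Cardinal.mk_Iio_ordinal, ← lift_aleph0.{u + 1, u},
    Cardinal.lift_le, ← lt_aleph_one_iff, ← lt_ord, ord_aleph]
  exact hβ

theorem Ordinal.sSup_lt_omega_one {s : Set Ordinal.{u}} (hs : s.Countable) (hs' : s ⊆ Set.Iio ω₁) :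
    sSup s < ω₁ := by
  have := hs.to_subtype
  rw [sSup_eq_iSup']
  exact iSup_lt_omega_one fun z => hs' z.2

theorem Set.Countable.setOf_finset_subset {α : Type*} {s : Set α} (hs : s.Countable) :
    {F : Finset α | ↑F ⊆ s}.Countable :=
  ((countable_ofPred_finite_subset hs).preimage coe_injective).mono fun F hF => by
    exact ⟨F.finite_toSet, hF⟩

theorem exists_lt_omega_one_notMem (M : Finset Ordinal.{u} → Set Ordinal.{u})
    (hM : ∀ F, (M F).Countable) : ∃ δ < ω₁, ∀ F : Finset Ordinal, ↑F ⊆ Set.Iio δ → δ ∉ M F := by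
  let N (β : Ordinal) : Set Ordinal :=
    (⋃ F ∈ {F : Finset Ordinal | ↑F ⊆ Set.Iio β}, M F) ∩ Set.Iio ω₁
  have hN : ∀ β < ω₁, (N β).Countable := fun β hβ =>
    ((countable_Iio_of_lt_omega_one hβ).setOf_finset_subset.biUnion fun F _ => hM F).mono
      Set.inter_subset_left
  let g (β : Ordinal) : Ordinal := Order.succ (max β (sSup (N β)))
  have hg_lt : ∀ β < ω₁, g β < ω₁ := fun β hβ => (isSuccLimit_omega 1).succ_lt
    (max_lt hβ (sSup_lt_omega_one (hN β hβ) Set.inter_subset_right))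
  have hg_gt : ∀ β, β < g β := fun β => Order.lt_succ_of_le (le_max_left _ _)
  have hg_N : ∀ β, ∀ z ∈ N β, z < g β := fun β z hz => Order.lt_succ_of_le
    ((le_csSup ⟨ω₁, fun _ h => h.2.le⟩ hz).trans (le_max_right _ _))
  have hδ : nfp g 0 < ω₁ := nfp_lt_ord (by simp) hg_lt (omega_pos 1)
  -- `F` lies below some iterate `g^[n] 0`, so what it forbids lies below `g^[n + 1] 0 ≤ nfp g 0`.
  refine ⟨nfp g 0, hδ, fun F hF hδM => ?_⟩
  have hmono : Monotone fun n => g^[n] 0 := monotone_nat_of_le_succ fun n => by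
    rw [Function.iterate_succ_apply']; exact (hg_gt _).le
  choose! n hn using fun a (ha : a ∈ F) => lt_nfp_iff.1 (hF ha)
  have hFN : ↑F ⊆ Set.Iio (g^[F.sup n] 0) := fun a ha =>
    (hn a ha).trans_le (hmono (le_sup ha))
  have hlt := hg_N _ _ ⟨Set.mem_biUnion hFN hδM, hδ⟩
  rw [← Function.iterate_succ_apply' g] at hlt
  exact (iterate_le_nfp g 0 _).not_gt hlt

theorem exists_lt_omega_one_forall_finset {κ : Type*} [Countable κ] (f : Finset Ordinal.{u} → κ) :
    ∃ δ < ω₁, ∀ F : Finset Ordinal, ↑F ⊆ Set.Iio δ →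
      ∃ y ∈ Set.Iio δ, (∀ a ∈ F, a < y) ∧ ∀ s ⊆ F, f (insert y s) = f (insert δ s) := by
  let type (F : Finset Ordinal) (y : Ordinal) : F.powerset → κ := fun s => f (insert y s)
  let above (F : Finset Ordinal) (τ : F.powerset → κ) : Set Ordinal :=
    {y | (∀ a ∈ F, a < y) ∧ type F y = τ}
  obtain ⟨δ, hδ, hδM⟩ := exists_lt_omega_one_notMem (fun F => Set.range fun τ => sInf (above F τ))
    fun F => Set.countable_range _
  refine ⟨δ, hδ, fun F hF => ?_⟩
  -- `δ` is not the least ordinal above `F` of its own type over `F`.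
  have hδF : δ ∈ above F (type F δ) := ⟨hF, rfl⟩
  obtain ⟨hlt, htype⟩ := csInf_mem ⟨δ, hδF⟩
  exact ⟨_, (csInf_le' hδF).lt_of_ne fun h => hδM F hF ⟨_, h⟩, hlt,
    fun s hs => congrFun htype ⟨s, mem_powerset.2 hs⟩⟩

theorem apply_eq_of_subset_range_union_singleton {β κ : Type*} [DecidableEq β] {f : Finset β → κ}
    {α : ℕ → β} (hα : Function.Injective α) {δ : β} {m : ℕ} {c : κ}
    (hδ : ∀ I : Finset ℕ, I.card = m → f (insert δ (I.image α)) = c)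
    (hα' : ∀ I : Finset ℕ, I.card = m + 1 → f (I.image α) = c)
    {s : Finset β} (hs : ↑s ⊆ Set.range α ∪ {δ}) (hcard : s.card = m + 1) : f s = c := by
  obtain ⟨I, -, hI⟩ := (subset_set_image_iff (s := Set.univ) (t := s.erase δ) (f := α)).1 <| by
    rw [Set.image_univ]
    intro a ha
    exact (hs (mem_of_mem_erase ha)).resolve_right (ne_of_mem_erase ha)
  have hIcard : I.card = (s.erase δ).card := by rw [← hI, card_image_of_injective _ hα]
  by_cases hδs : δ ∈ s
  · rw [card_erase_of_mem hδs, hcard, Nat.add_sub_cancel] at hIcard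
    rw [← insert_erase hδs, ← hI, hδ I hIcard]
  · rw [erase_eq_of_notMem hδs] at hI hIcard
    rw [← hI, hα' I (hIcard.trans hcard)]

/-- Dushnik–Miller partition relation `ω₁ → (ω+1)ⁿ_k`: for any coloring of the
`n`-element subsets of `ω₁` with `k` colors there is a subset of order type `ω+1`
(coded as the range of a strictly increasing sequence `α` together with a top
element `δ` above all of them, everything below `ω₁`) on whose `n`-element
subsets the coloring is constant. -/
theorem stmt_0 (n k : ℕ) (f : Finset Ordinal → Fin k) :
    ∃ (α : ℕ → Ordinal) (δ : Ordinal), StrictMono α ∧ (∀ j, α j < δ) ∧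
      δ < (Cardinal.aleph 1).ord ∧
      ∃ c : Fin k, ∀ s : Finset Ordinal,
        ↑s ⊆ Set.range α ∪ {δ} → s.card = n → f s = c := by
  obtain ⟨δ, hδ, hclosed⟩ := exists_lt_omega_one_forall_finset f
  obtain ⟨x, hx, hxδ, hend⟩ := exists_strictMono_isEndHomogeneous hclosed
  obtain ⟨e, he, c, hc⟩ :=
    exists_strictMono_monochromatic (n - 1) fun I => f (insert δ (I.image x))
  refine ⟨x ∘ e, δ, hx.comp he, fun j => hxδ (e j), by rwa [ord_aleph], ?_⟩
  cases n with
  | zero => exact ⟨f ∅, fun s _ hs => by rw [card_eq_zero.1 hs]⟩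
  | succ m =>
    have hδc : ∀ I : Finset ℕ, I.card = m → f (insert δ (I.image (x ∘ e))) = c := fun I hI => by
      rw [← image_image]
      exact hc I hI
    exact ⟨c, fun s hs hcard => apply_eq_of_subset_range_union_singleton (hx.comp he).injective
      hδc ((hend.comp he).apply_image_eq hδc) hs hcard⟩
end

section
/- Fix r ≥ 2 and for l ≤ r let s_l ∈ ℕ^{r+l} be the string of 2l many 2's followed by r − l many 4's. Suppose l' < l ≤ r, and suppose ā is a tuple of r + l' ordinals and b̄ a tuple of r + l ordinals arranged so that: ā consists of pairs (γ_k, δ_k) for k < l' followed by singletons β^i_k for l' ≤ k < l (at step i) followed by singletons ε_k for l ≤ k < r, and b̄ consists of the same pairs (γ_k, δ_k) for k < l', then pairs (β^i_k, β^j_k) for l' ≤ k < l, then the same ε_k for l ≤ k < r. If x_i = (1/2)·(s_{l'} * ā_i) and x_j = (1/2)·(s_{l'} * ā_j) (with i ≠ j, sharing the pairs and singletons but with disjoint middle parts), then x_i + x_j = s_l * b̄_{i,j}. -/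
/-!
Writing `l = l' + a` and `r = l + b`, both sides split into three blocks of consecutive
positions. On the block of pairs `(γ_k, δ_k)` each `x` carries weight `½ · 2 = 1`, so the sum has
weight `2 = s_l`; on the middle block each singleton `β_k` carries weight `½ · 4 = 2`, which is
what `s_l` puts on each entry of the new pair `(βi_k, βj_k)`; on the tail each `ε_k` gets
`2 + 2 = 4`. Hence both sides are the same linear combination of three sums of point masses.
-/

/-- The star operation: for a string `s ∈ ℚ^k` and a `k`-tuple `a` of indices,
`star s a` is the finitely supported function sending `a m` to `s m`. -/
noncomputable def star {k : ℕ} {I : Type*} (s : Fin k → ℚ) (a : Fin k → I) : I →₀ ℚ :=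
  ∑ m, Finsupp.single (a m) (s m)

/-- The string `s_{r,l}` of length `r + l`: `2l` many `2`'s followed by
`r − l` many `4`'s. -/
def sStr (r l : ℕ) : Fin (r + l) → ℚ := fun m => if (m : ℕ) < 2 * l then 2 else 4

/-- The tuple `ā_i` (of length `r + l'`): pairs `(γ_k, δ_k)` for `k < l'`, then
singletons `β_k` for `l' ≤ k < l`, then singletons `ε_k` for `l ≤ k < r`. -/
def tupA (l' l : ℕ) (γ δ β ε : ℕ → Ordinal) : ℕ → Ordinal := fun m =>
  if m < 2 * l' then (if m % 2 = 0 then γ (m / 2) else δ (m / 2))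
  else if m < l' + l then β (m - l')
  else ε (m - l')

/-- The tuple `b̄_{i,j}` (of length `r + l`): pairs `(γ_k, δ_k)` for `k < l'`,
then pairs `(βi_k, βj_k)` for `l' ≤ k < l`, then singletons `ε_k` for `l ≤ k < r`. -/
def tupB (l' l : ℕ) (γ δ βi βj ε : ℕ → Ordinal) : ℕ → Ordinal := fun m =>
  if m < 2 * l' then (if m % 2 = 0 then γ (m / 2) else δ (m / 2))
  else if m < 2 * l then
    (if (m - 2 * l') % 2 = 0 then βi (l' + (m - 2 * l') / 2) else βj (l' + (m - 2 * l') / 2))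
  else ε (m - l)

open Finset
open Finsupp (single smul_single_one)

theorem Finset.sum_range_two_mul {M : Type*} [AddCommMonoid M] (n : ℕ) (f : ℕ → M) :
    ∑ m ∈ range (2 * n), f m = ∑ k ∈ range n, (f (2 * k) + f (2 * k + 1)) := by
  induction n with
  | zero => simp
  | succ n ih => rw [mul_add_one, sum_range_succ, sum_range_succ, ih, sum_range_succ, add_assoc]

theorem star_sStr_eq_sum_range {I : Type*} (r l : ℕ) (f : ℕ → I) :
    star (sStr r l) (fun m : Fin (r + l) => f m) =
      ∑ m ∈ range (r + l), single (f m) (if m < 2 * l then (2 : ℚ) else 4) :=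
  Fin.sum_univ_eq_sum_range (fun m => single (f m) (if m < 2 * l then (2 : ℚ) else 4)) _

section

variable {l' a b : ℕ} (γ δ β βi βj ε : ℕ → Ordinal)

theorem star_sStr_tupA :
    star (sStr (l' + a + b) l') (fun m : Fin (l' + a + b + l') => tupA l' (l' + a) γ δ β ε m) =
      (2 : ℚ) • ∑ k ∈ range l', (single (γ k) 1 + single (δ k) 1) +
      (4 : ℚ) • ∑ k ∈ range a, single (β (l' + k)) 1 +
      (4 : ℚ) • ∑ k ∈ range b, single (ε (l' + a + k)) 1 := by
  rw [star_sStr_eq_sum_range, show l' + a + b + l' = 2 * l' + a + b by ring, sum_range_add,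
    sum_range_add, sum_range_two_mul]
  simp only [smul_sum, smul_add, smul_single_one]
  refine congrArg₂ (· + ·) (congrArg₂ (· + ·) ?_ ?_) ?_ <;>
    refine sum_congr rfl fun k hk => ?_ <;>
    grind [tupA]

theorem star_sStr_tupB :
    star (sStr (l' + a + b) (l' + a))
        (fun m : Fin (l' + a + b + (l' + a)) => tupB l' (l' + a) γ δ βi βj ε m) =
      (2 : ℚ) • ∑ k ∈ range l', (single (γ k) 1 + single (δ k) 1) +
      ((2 : ℚ) • ∑ k ∈ range a, single (βi (l' + k)) 1 +
        (2 : ℚ) • ∑ k ∈ range a, single (βj (l' + k)) 1) +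
      (4 : ℚ) • ∑ k ∈ range b, single (ε (l' + a + k)) 1 := by
  rw [star_sStr_eq_sum_range, show l' + a + b + (l' + a) = 2 * l' + 2 * a + b by ring,
    sum_range_add, sum_range_add, ← smul_add, ← sum_add_distrib]
  simp only [sum_range_two_mul, smul_sum, smul_add, smul_single_one]
  refine congrArg₂ (· + ·) (congrArg₂ (· + ·) ?_ ?_) ?_ <;>
    refine sum_congr rfl fun k hk => ?_ <;>
    grind [tupB]

end

theorem stmt_5_general (r l l' : ℕ) (hl' : l' < l) (hl : l ≤ r)
    (γ δ βi βj ε : ℕ → Ordinal) :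
    (2 : ℚ)⁻¹ • star (sStr r l') (fun m : Fin (r + l') => tupA l' l γ δ βi ε m) +
      (2 : ℚ)⁻¹ • star (sStr r l') (fun m : Fin (r + l') => tupA l' l γ δ βj ε m) =
    star (sStr r l) (fun m : Fin (r + l) => tupB l' l γ δ βi βj ε m) := by
  obtain ⟨a, rfl⟩ := Nat.exists_eq_add_of_le hl'.le
  obtain ⟨b, rfl⟩ := Nat.exists_eq_add_of_le hl
  rw [star_sStr_tupA, star_sStr_tupA, star_sStr_tupB]
  module

/-- If `x_i = (1/2)·(s_{l'} * ā_i)` and `x_j = (1/2)·(s_{l'} * ā_j)` share the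
pairs `(γ_k, δ_k)` and the tail singletons `ε_k` but have disjoint middle parts
`βi`, `βj` (all tuples listed increasingly), then `x_i + x_j = s_l * b̄_{i,j}`. -/
theorem stmt_5 (r l l' : ℕ) (hr : 2 ≤ r) (hl' : l' < l) (hl : l ≤ r)
    (γ δ βi βj ε : ℕ → Ordinal)
    (hAi : StrictMono (fun m : Fin (r + l') => tupA l' l γ δ βi ε m))
    (hAj : StrictMono (fun m : Fin (r + l') => tupA l' l γ δ βj ε m))
    (hB : StrictMono (fun m : Fin (r + l) => tupB l' l γ δ βi βj ε m)) :
    (2 : ℚ)⁻¹ • star (sStr r l') (fun m : Fin (r + l') => tupA l' l γ δ βi ε m) +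
      (2 : ℚ)⁻¹ • star (sStr r l') (fun m : Fin (r + l') => tupA l' l γ δ βj ε m) =
    star (sStr r l) (fun m : Fin (r + l) => tupB l' l γ δ βi βj ε m) :=
  stmt_5_general r l l' hl' hl γ δ βi βj ε
end

section
/- With r = 2 and strings s_0 = (4,4), s_1 = (2,2,4), s_2 = (2,2,2,2): if A = {α_j : j ≤ ω} ⊆ ω₁ has order type ω+1, f is a 2-coloring of ⊕_{i<ω₁} ℚ, d_i(ā) = f(s_i * ā) is constant on [A]^{2+i} with value ρ_i for each i ≤ 2, and ρ_0 = ρ_2 = ρ, then X = {x_i : i ∈ ω} with x_i = (1/2)·(s_0 * (α_{2i}, α_{2i+1})) satisfies f(x + y) = ρ for all x, y ∈ X. -/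
/-! For `i < j` the sum `x_i + x_j` is `s_2` placed on the increasing quadruple
`(α_{2i}, α_{2i+1}, α_{2j}, α_{2j+1})`, and `x_i + x_i` is `s_0` placed on the pair
`(α_{2i}, α_{2i+1})`; so every `f (x + y)` is `ρ_2` or `ρ_0`, which agree. The set `X` is
infinite because `x_i` is the only `x_j` not vanishing at `α_{2i}`. -/

abbrev O1 := {o : Ordinal // o < (Cardinal.aleph 1).ord}

def s0 : Fin 2 → ℚ := ![4, 4]
def s1 : Fin 3 → ℚ := ![2, 2, 4]
def s2 : Fin 4 → ℚ := ![2, 2, 2, 2]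

noncomputable def x11 (α : ℕ → O1) (αω : O1) (i : ℕ) : O1 →₀ ℚ :=
  (2 : ℚ)⁻¹ • star s0 ![α (2 * i), α (2 * i + 1)]

section Star

variable {I : Type*} {k : ℕ}

theorem star_fin_zero (s : Fin 0 → ℚ) (a : Fin 0 → I) : star s a = 0 := by
  simp [_root_.star]

theorem star_vecCons (c : ℚ) (s : Fin k → ℚ) (x : I) (a : Fin k → I) :
    star (Matrix.vecCons c s) (Matrix.vecCons x a) = Finsupp.single x c + star s a := by
  simp [_root_.star, Fin.sum_univ_succ]

theorem smul_star (c : ℚ) (s : Fin k → ℚ) (a : Fin k → I) : c • star s a = star (c • s) a := by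
  simp only [_root_.star, Finset.smul_sum, Finsupp.smul_single, Pi.smul_apply]

theorem star_apply_of_notMem_range (s : Fin k → ℚ) {a : Fin k → I} {x : I}
    (hx : x ∉ Set.range a) : star s a x = 0 := by
  classical
  simp only [_root_.star, Finsupp.finsetSum_apply, Finsupp.single_apply]
  exact Finset.sum_eq_zero fun m _ => if_neg fun h => hx ⟨m, h⟩

theorem star_apply_self (s : Fin k → ℚ) {a : Fin k → I} (ha : Function.Injective a)
    (m : Fin k) : star s a (a m) = s m := by
  classical
  simp [_root_.star, Finsupp.finsetSum_apply, Finsupp.single_apply, ha.eq_iff]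

end Star

section Blocks

variable {β : Type*} [Preorder β] {α : ℕ → β}

theorem strictMono_block (hα : StrictMono α) (i : ℕ) : StrictMono ![α (2 * i), α (2 * i + 1)] := by
  simp [Fin.strictMono_iff_lt_succ, hα.lt_iff_lt]

theorem strictMono_two_blocks (hα : StrictMono α) {i j : ℕ} (hij : i < j) :
    StrictMono ![α (2 * i), α (2 * i + 1), α (2 * j), α (2 * j + 1)] := by
  have hgap : 2 * i + 1 < 2 * j := by omega
  simp [Fin.strictMono_iff_lt_succ, Fin.forall_fin_succ, hα.lt_iff_lt, hgap]

end Blocks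

section Vectors

variable (α : ℕ → O1) (αω : O1)

theorem x11_eq_star (i : ℕ) : x11 α αω i = star ![2, 2] ![α (2 * i), α (2 * i + 1)] := by
  rw [x11, smul_star, s0]
  congr 1
  ext m; fin_cases m <;> norm_num

theorem two_smul_x11 (i : ℕ) : (2 : ℚ) • x11 α αω i = star s0 ![α (2 * i), α (2 * i + 1)] := by
  rw [x11, smul_smul]
  norm_num

theorem x11_add_x11 (i j : ℕ) : x11 α αω i + x11 α αω j =
    star s2 ![α (2 * i), α (2 * i + 1), α (2 * j), α (2 * j + 1)] := by
  simp only [x11_eq_star, s2, star_vecCons, star_fin_zero]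
  abel

variable {α}

theorem x11_injective (hα : StrictMono α) : Function.Injective (x11 α αω) := by
  intro i j hij
  by_contra hne
  have hi : x11 α αω i (α (2 * i)) = 2 := by
    rw [x11_eq_star]
    exact star_apply_self _ (strictMono_block hα i).injective 0
  have hj : x11 α αω j (α (2 * i)) = 0 := by
    rw [x11_eq_star]
    refine star_apply_of_notMem_range _ ?_
    have hodd : 2 * i ≠ 2 * j + 1 := by omega
    simp [hα.injective.eq_iff, hne, hodd]
  rw [hij, hj] at hi
  norm_num at hi

end Vectors

theorem stmt_11_general (f : (O1 →₀ ℚ) → Fin 2) (α : ℕ → O1) (αω : O1)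
    (hα : StrictMono α)
    (ρ0 ρ2 : Fin 2)
    (h0 : ∀ a : Fin 2 → O1, StrictMono a →
      (∀ m, a m ∈ Set.range α ∪ {αω}) → f (star s0 a) = ρ0)
    (h2 : ∀ a : Fin 4 → O1, StrictMono a →
      (∀ m, a m ∈ Set.range α ∪ {αω}) → f (star s2 a) = ρ2)
    (hρ : ρ0 = ρ2) :
    (∀ i, (2 : ℚ) • x11 α αω i = star s0 ![α (2 * i), α (2 * i + 1)]) ∧
    (∀ i j, i < j → x11 α αω i + x11 α αω j =
      star s2 ![α (2 * i), α (2 * i + 1), α (2 * j), α (2 * j + 1)]) ∧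
    (Set.range (x11 α αω)).Infinite ∧
    (∀ a ∈ Set.range (x11 α αω), ∀ b ∈ Set.range (x11 α αω), f (a + b) = ρ0) := by
  have hsum {i j : ℕ} (hij : i < j) : f (x11 α αω i + x11 α αω j) = ρ0 := by
    rw [x11_add_x11, hρ]
    exact h2 _ (strictMono_two_blocks hα hij) (by simp [Fin.forall_fin_succ])
  refine ⟨two_smul_x11 α αω, fun i j _ => x11_add_x11 α αω i j,
    Set.infinite_range_of_injective (x11_injective αω hα), ?_⟩
  rintro _ ⟨i, rfl⟩ _ ⟨j, rfl⟩
  rcases lt_trichotomy i j with hij | rfl | hij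
  · exact hsum hij
  · rw [← two_smul ℚ, two_smul_x11]
    exact h0 _ (strictMono_block hα i) (by simp [Fin.forall_fin_succ])
  · rw [add_comm]
    exact hsum hij

/-- Case `ρ_0 = ρ_2` of the `ZFC` proof of `ℝ →⁺ (ℵ₀)₂`: given a 2-coloring `f`
of `⊕_{i<ω₁} ℚ`, a set `A = {α_j : j ≤ ω}` of order type `ω+1` on which each
derived coloring `d_i(ā) = f(s_i * ā)` is constant with value `ρ_i`, and
`ρ_0 = ρ_2`, the vectors `x_i = (1/2)·(s_0 * (α_{2i}, α_{2i+1}))` satisfy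
`2x_i = s_0 * (α_{2i}, α_{2i+1})`,
`x_i + x_j = s_2 * (α_{2i}, α_{2i+1}, α_{2j}, α_{2j+1})` for `i < j`,
and `f(x + y) = ρ_0` for all `x, y ∈ X = {x_i : i ∈ ω}`. -/
theorem stmt_11 (f : (O1 →₀ ℚ) → Fin 2) (α : ℕ → O1) (αω : O1)
    (hα : StrictMono α) (htop : ∀ j, α j < αω)
    (ρ0 ρ1 ρ2 : Fin 2)
    (h0 : ∀ a : Fin 2 → O1, StrictMono a →
      (∀ m, a m ∈ Set.range α ∪ {αω}) → f (star s0 a) = ρ0)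
    (h1 : ∀ a : Fin 3 → O1, StrictMono a →
      (∀ m, a m ∈ Set.range α ∪ {αω}) → f (star s1 a) = ρ1)
    (h2 : ∀ a : Fin 4 → O1, StrictMono a →
      (∀ m, a m ∈ Set.range α ∪ {αω}) → f (star s2 a) = ρ2)
    (hρ : ρ0 = ρ2) :
    (∀ i, (2 : ℚ) • x11 α αω i = star s0 ![α (2 * i), α (2 * i + 1)]) ∧
    (∀ i j, i < j → x11 α αω i + x11 α αω j =
      star s2 ![α (2 * i), α (2 * i + 1), α (2 * j), α (2 * j + 1)]) ∧
    (Set.range (x11 α αω)).Infinite ∧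
    (∀ a ∈ Set.range (x11 α αω), ∀ b ∈ Set.range (x11 α αω), f (a + b) = ρ0) :=
  stmt_11_general f α αω hα ρ0 ρ2 h0 h2 hρ
end

section
/- With r = 2 and strings s_0 = (4,4), s_1 = (2,2,4), s_2 = (2,2,2,2): if A = {α_j : j ≤ ω} ⊆ ω₁ has order type ω+1, f is a 2-coloring of ⊕_{i<ω₁} ℚ, d_i(ā) = f(s_i * ā) is constant on [A]^{2+i} with value ρ_i for i ≤ 2, and ρ_1 = ρ_2 = ρ, then X = {x_i : i ∈ ω} with x_i = (1/2)·(s_1 * (α_0, α_1, α_{i+2})) satisfies f(x + y) = ρ for all x, y ∈ X. -/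
/-- `x_i = (1/2)·(s_1 * (α_0, α_1, α_{i+2}))`. -/
noncomputable def x12 (α : ℕ → O1) (αω : O1) (i : ℕ) : O1 →₀ ℚ :=
  (2 : ℚ)⁻¹ • star s1 ![α 0, α 1, α (i + 2)]

/-! Halving `s_1` turns `x_i` into `α_0 ↦ 1, α_1 ↦ 1, α_{i+2} ↦ 2`, so `x_i + x_i` is an `s_1`-pattern
and, for `i < j`, `x_i + x_j` is an `s_2`-pattern on increasing indices from `A`; homogeneity of
`d_1` and `d_2` with `ρ_1 = ρ_2` then colors every sum `ρ_1`. Distinct `x_i` differ at `α_{i+2}`. -/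

open Finsupp

lemma x12_eq_single (α : ℕ → O1) (αω : O1) (i : ℕ) :
    x12 α αω i = single (α 0) 1 + single (α 1) 1 + single (α (i + 2)) 2 := by
  rw [x12, _root_.star, Fin.sum_univ_three]
  simp only [s1, Matrix.cons_val, smul_add, smul_single, smul_eq_mul]
  norm_num

lemma two_smul_x12 (α : ℕ → O1) (αω : O1) (i : ℕ) :
    (2 : ℚ) • x12 α αω i = star s1 ![α 0, α 1, α (i + 2)] :=
  smul_inv_smul₀ two_ne_zero _

lemma x12_add_x12 (α : ℕ → O1) (αω : O1) (i j : ℕ) :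
    x12 α αω i + x12 α αω j = star s2 ![α 0, α 1, α (i + 2), α (j + 2)] := by
  have single_two : ∀ o : O1, single o (2 : ℚ) = single o 1 + single o 1 := fun o => by
    rw [← single_add]; norm_num
  rw [x12_eq_single, x12_eq_single, _root_.star, Fin.sum_univ_four]
  simp only [s2, Matrix.cons_val]
  rw [single_two (α 0), single_two (α 1)]
  abel

lemma x12_apply_self {α : ℕ → O1} (hα : Function.Injective α) (αω : O1) (i : ℕ) :
    x12 α αω i (α (i + 2)) = 2 := by
  simp [x12_eq_single, hα.eq_iff]

lemma x12_apply_of_ne {α : ℕ → O1} (hα : Function.Injective α) (αω : O1) {i j : ℕ}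
    (hij : i ≠ j) : x12 α αω j (α (i + 2)) = 0 := by
  simp [x12_eq_single, hα.eq_iff, hij]

lemma x12_injective {α : ℕ → O1} (hα : Function.Injective α) (αω : O1) :
    Function.Injective (x12 α αω) := by
  intro i j hij
  by_contra hne
  have := x12_apply_self hα αω i
  rw [hij, x12_apply_of_ne hα αω hne] at this
  norm_num at this

theorem stmt_12_general (f : (O1 →₀ ℚ) → Fin 2) (α : ℕ → O1) (αω : O1)
    (hα : StrictMono α)
    (ρ1 ρ2 : Fin 2)
    (h1 : ∀ a : Fin 3 → O1, StrictMono a →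
      (∀ m, a m ∈ Set.range α ∪ {αω}) → f (star s1 a) = ρ1)
    (h2 : ∀ a : Fin 4 → O1, StrictMono a →
      (∀ m, a m ∈ Set.range α ∪ {αω}) → f (star s2 a) = ρ2)
    (hρ : ρ1 = ρ2) :
    (∀ i, (2 : ℚ) • x12 α αω i = star s1 ![α 0, α 1, α (i + 2)]) ∧
    (∀ i j, i < j → x12 α αω i + x12 α αω j =
      star s2 ![α 0, α 1, α (i + 2), α (j + 2)]) ∧
    (Set.range (x12 α αω)).Infinite ∧
    (∀ a ∈ Set.range (x12 α αω), ∀ b ∈ Set.range (x12 α αω), f (a + b) = ρ1) := by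
  refine ⟨two_smul_x12 α αω, fun i j _ => x12_add_x12 α αω i j,
    Set.infinite_range_of_injective (x12_injective hα.injective αω), ?_⟩
  rintro _ ⟨i, rfl⟩ _ ⟨j, rfl⟩
  wlog hij : i ≤ j generalizing i j
  · rw [add_comm]
    exact this j i (le_of_not_ge hij)
  rcases hij.lt_or_eq with hij | rfl
  · rw [x12_add_x12, hρ]
    refine h2 _ ?_ fun m => Or.inl (by fin_cases m <;> exact ⟨_, rfl⟩)
    simp [hα.lt_iff_lt, hij]
  · rw [← two_smul ℚ, two_smul_x12]
    refine h1 _ ?_ fun m => Or.inl (by fin_cases m <;> exact ⟨_, rfl⟩)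
    simp [hα.lt_iff_lt]

/-- Case `ρ_1 = ρ_2` of the `ZFC` proof of `ℝ →⁺ (ℵ₀)₂`: given a 2-coloring `f`
of `⊕_{i<ω₁} ℚ`, a set `A = {α_j : j ≤ ω}` of order type `ω+1` on which each
derived coloring `d_i(ā) = f(s_i * ā)` is constant with value `ρ_i`, and
`ρ_1 = ρ_2`, the vectors `x_i = (1/2)·(s_1 * (α_0, α_1, α_{i+2}))` satisfy
`2x_i = s_1 * (α_0, α_1, α_{i+2})`,
`x_i + x_j = s_2 * (α_0, α_1, α_{i+2}, α_{j+2})` for `i < j`,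
and `f(x + y) = ρ_1` for all `x, y ∈ X = {x_i : i ∈ ω}`. -/
theorem stmt_12 (f : (O1 →₀ ℚ) → Fin 2) (α : ℕ → O1) (αω : O1)
    (hα : StrictMono α) (htop : ∀ j, α j < αω)
    (ρ0 ρ1 ρ2 : Fin 2)
    (h0 : ∀ a : Fin 2 → O1, StrictMono a →
      (∀ m, a m ∈ Set.range α ∪ {αω}) → f (star s0 a) = ρ0)
    (h1 : ∀ a : Fin 3 → O1, StrictMono a →
      (∀ m, a m ∈ Set.range α ∪ {αω}) → f (star s1 a) = ρ1)
    (h2 : ∀ a : Fin 4 → O1, StrictMono a →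
      (∀ m, a m ∈ Set.range α ∪ {αω}) → f (star s2 a) = ρ2)
    (hρ : ρ1 = ρ2) :
    (∀ i, (2 : ℚ) • x12 α αω i = star s1 ![α 0, α 1, α (i + 2)]) ∧
    (∀ i j, i < j → x12 α αω i + x12 α αω j =
      star s2 ![α 0, α 1, α (i + 2), α (j + 2)]) ∧
    (Set.range (x12 α αω)).Infinite ∧
    (∀ a ∈ Set.range (x12 α αω), ∀ b ∈ Set.range (x12 α αω), f (a + b) = ρ1) :=
  stmt_12_general f α αω hα ρ1 ρ2 h1 h2 hρ
end
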